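/- arXiv:2204.02113 — 4 statements merged into one kernel-verified Lean document; each statement's English description precedes it below -/
import Mathlib

section
/- Let W ∈ R^{n×k} have full column rank with QR factorization W = Q T (Q with orthonormal columns, T invertible upper triangular), and let P be a selection matrix with W^T P invertible. Then Q^T P is invertible and P (W^T P)^{-1} W^T = P (Q^T P)^{-1} Q^T. -/
/-!
The oblique projector `P (Wᵀ P)⁻¹ Wᵀ` depends on `W` only through its column space: replacing
`W` by `W T` with `T` invertible multiplies `(Wᵀ P)⁻¹` on the right by `Tᵀ⁻¹`, which cancels
against the `Tᵀ` in `(W T)ᵀ`. The QR factor `Q = W T⁻¹` spans the same column space as `W`.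
-/

open Matrix

def selectionMatrix {n k : ℕ} (p : Fin k → Fin n) : Matrix (Fin n) (Fin k) ℝ :=
  Matrix.of fun i j => if i = p j then 1 else 0

section

variable {α : Type*} [CommRing α] {n k : Type*} [Fintype n] [Fintype k]
  [DecidableEq k]

/-- When `Wᵀ P` is invertible: the projector onto the column space of `P` along the orthogonal
complement of that of `W`. -/
noncomputable def interpolatoryProjector (P W : Matrix n k α) : Matrix n n α :=
  P * (Wᵀ * P)⁻¹ * Wᵀ

omit [DecidableEq k] in
theorem transpose_mul_mul_eq (P Q : Matrix n k α) (T : Matrix k k α) :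
    (Q * T)ᵀ * P = Tᵀ * (Qᵀ * P) := by
  rw [transpose_mul, Matrix.mul_assoc]

theorem isUnit_det_transpose_mul_of_mul_right {P Q : Matrix n k α} {T : Matrix k k α}
    (h : IsUnit ((Q * T)ᵀ * P).det) : IsUnit (Qᵀ * P).det := by
  rw [transpose_mul_mul_eq, det_mul] at h
  exact isUnit_of_mul_isUnit_right h

theorem interpolatoryProjector_mul_right (P Q : Matrix n k α)
    {T : Matrix k k α} (hT : IsUnit T.det) :
    interpolatoryProjector P (Q * T) = interpolatoryProjector P Q := by
  have hTt : Tᵀ⁻¹ * Tᵀ = 1 := nonsing_inv_mul _ (by rwa [det_transpose])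
  calc P * ((Q * T)ᵀ * P)⁻¹ * (Q * T)ᵀ
      = P * (Qᵀ * P)⁻¹ * (Tᵀ⁻¹ * Tᵀ) * Qᵀ := by
        rw [transpose_mul_mul_eq, Matrix.mul_inv_rev, transpose_mul]
        simp only [Matrix.mul_assoc]
    _ = P * (Qᵀ * P)⁻¹ * Qᵀ := by rw [hTt, Matrix.mul_one]

end

theorem interpolatory_projector_qr_eq_general {n k : ℕ}
    (W Q : Matrix (Fin n) (Fin k) ℝ) (T : Matrix (Fin k) (Fin k) ℝ)
    (hQR : W = Q * T) (hT : IsUnit T.det)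
    (p : Fin k → Fin n)
    (hinv : IsUnit (Wᵀ * selectionMatrix p).det) :
    IsUnit (Qᵀ * selectionMatrix p).det ∧
    selectionMatrix p * (Wᵀ * selectionMatrix p)⁻¹ * Wᵀ =
      selectionMatrix p * (Qᵀ * selectionMatrix p)⁻¹ * Qᵀ := by
  subst hQR
  exact ⟨isUnit_det_transpose_mul_of_mul_right hinv,
    interpolatoryProjector_mul_right (selectionMatrix p) Q hT⟩

/-- If `W = Q T` is a QR factorization of the full-column-rank matrix `W` (with `Q` having
orthonormal columns and `T` invertible upper triangular), and `P` is a selection matrix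
with `Wᵀ P` invertible, then `Qᵀ P` is invertible and
`P (Wᵀ P)⁻¹ Wᵀ = P (Qᵀ P)⁻¹ Qᵀ`. -/
theorem interpolatory_projector_qr_eq {n k : ℕ}
    (W Q : Matrix (Fin n) (Fin k) ℝ) (T : Matrix (Fin k) (Fin k) ℝ)
    (hQR : W = Q * T) (hQ : Qᵀ * Q = 1)
    (hTtri : T.BlockTriangular (id : Fin k → Fin k)) (hT : IsUnit T.det)
    (p : Fin k → Fin n) (hp : Function.Injective p)
    (hinv : IsUnit (Wᵀ * selectionMatrix p).det) :
    IsUnit (Qᵀ * selectionMatrix p).det ∧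
    selectionMatrix p * (Wᵀ * selectionMatrix p)⁻¹ * Wᵀ =
      selectionMatrix p * (Qᵀ * selectionMatrix p)⁻¹ * Qᵀ :=
  interpolatory_projector_qr_eq_general W Q T hQR hT p hinv
end

section
/- Let A ∈ R^{m×n} and let C ∈ R^{m×k}, R ∈ R^{k×n} have full rank k. With M = C⁺ A R⁺, one has A - C M R = (I - C C⁺) A + C C⁺ A (I - R⁺ R), and hence ‖A - C M R‖ ≤ ‖(I - C C⁺) A‖ + ‖A (I - R⁺ R)‖ in the spectral norm. -/
open Matrix
open scoped Matrix.Norms.L2Operator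

/-- Moore–Penrose pseudoinverse of a full-column-rank matrix: `C⁺ = (Cᵀ C)⁻¹ Cᵀ`. -/
noncomputable def leftPinv {m k : ℕ} (C : Matrix (Fin m) (Fin k) ℝ) : Matrix (Fin k) (Fin m) ℝ :=
  (Cᵀ * C)⁻¹ * Cᵀ

/-- Moore–Penrose pseudoinverse of a full-row-rank matrix: `R⁺ = Rᵀ (R Rᵀ)⁻¹`. -/
noncomputable def rightPinv {k n : ℕ} (R : Matrix (Fin k) (Fin n) ℝ) : Matrix (Fin n) (Fin k) ℝ :=
  Rᵀ * (R * Rᵀ)⁻¹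

/-!
Writing `P = C C⁺` and `Q = R⁺ R`, the residual splits as `A - P A Q = (1 - P) A + P A (1 - Q)`,
which is pure algebra. For the bound, full column rank makes `P` an orthogonal projector, so
`‖P‖ ≤ 1` and `‖P A (1 - Q)‖ ≤ ‖A (1 - Q)‖`; the triangle inequality finishes.
-/

namespace Matrix

theorem sub_mul_mul_mul_eq_add {R : Type*} [Ring R] {l m n k : Type*} [Fintype l] [Fintype m]
    [Fintype n] [Fintype k] [DecidableEq m] [DecidableEq n]
    (A : Matrix m n R) (C : Matrix m k R) (X : Matrix k m R) (Y : Matrix n l R)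
    (B : Matrix l n R) :
    A - C * (X * A * Y) * B = (1 - C * X) * A + C * X * A * (1 - Y * B) := by
  simp only [Matrix.sub_mul, Matrix.mul_sub, Matrix.one_mul, Matrix.mul_one, Matrix.mul_assoc]
  abel

theorem l2_opNorm_sub_mul_add_mul_le {𝕜 : Type*} [RCLike 𝕜] {m n : Type*} [Fintype m]
    [Fintype n] [DecidableEq m] [DecidableEq n] {P : Matrix m m 𝕜} (hP : IsStarProjection P)
    (A B : Matrix m n 𝕜) : ‖(1 - P) * A + P * B‖ ≤ ‖(1 - P) * A‖ + ‖B‖ := calc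
  ‖(1 - P) * A + P * B‖ ≤ ‖(1 - P) * A‖ + ‖P‖ * ‖B‖ :=
    (norm_add_le _ _).trans (add_le_add le_rfl (l2_opNorm_mul P B))
  _ ≤ ‖(1 - P) * A‖ + ‖B‖ := by
    grw [IsStarProjection.norm_le P hP, one_mul]

end Matrix

section Pinv

variable {m k : ℕ} (C : Matrix (Fin m) (Fin k) ℝ)

theorem leftPinv_mul_self (hC : IsUnit (Cᵀ * C).det) : leftPinv C * C = 1 := by
  rw [leftPinv, Matrix.mul_assoc, nonsing_inv_mul _ hC]

theorem isStarProjection_mul_leftPinv (hC : IsUnit (Cᵀ * C).det) :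
    IsStarProjection (C * leftPinv C) where
  isIdempotentElem := by
    rw [IsIdempotentElem, Matrix.mul_assoc, ← Matrix.mul_assoc (leftPinv C),
      leftPinv_mul_self C hC, Matrix.one_mul]
  isSelfAdjoint := by
    rw [IsSelfAdjoint, star_eq_conjTranspose, conjTranspose_eq_transpose_of_trivial, leftPinv,
      transpose_mul, transpose_mul, transpose_nonsing_inv, transpose_mul, transpose_transpose,
      Matrix.mul_assoc]

end Pinv

theorem cur_error_split_and_bound_general {m n k : ℕ}
    (A : Matrix (Fin m) (Fin n) ℝ) (C : Matrix (Fin m) (Fin k) ℝ) (R : Matrix (Fin k) (Fin n) ℝ)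
    (hC : IsUnit (Cᵀ * C).det) :
    A - C * (leftPinv C * A * rightPinv R) * R =
        (1 - C * leftPinv C) * A + C * leftPinv C * A * (1 - rightPinv R * R) ∧
    ‖A - C * (leftPinv C * A * rightPinv R) * R‖ ≤
        ‖(1 - C * leftPinv C) * A‖ + ‖A * (1 - rightPinv R * R)‖ := by
  have split := sub_mul_mul_mul_eq_add A C (leftPinv C) (rightPinv R) R
  refine ⟨split, ?_⟩
  rw [split, Matrix.mul_assoc (C * leftPinv C) A]
  exact l2_opNorm_sub_mul_add_mul_le (isStarProjection_mul_leftPinv C hC) _ _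

/-- With `M = C⁺ A R⁺` one has
`A - C M R = (I - C C⁺) A + C C⁺ A (I - R⁺ R)` and hence
`‖A - C M R‖ ≤ ‖(I - C C⁺) A‖ + ‖A (I - R⁺ R)‖` in the spectral norm. -/
theorem cur_error_split_and_bound {m n k : ℕ}
    (A : Matrix (Fin m) (Fin n) ℝ) (C : Matrix (Fin m) (Fin k) ℝ) (R : Matrix (Fin k) (Fin n) ℝ)
    (hC : IsUnit (Cᵀ * C).det) (hR : IsUnit (R * Rᵀ).det) :
    A - C * (leftPinv C * A * rightPinv R) * R =
        (1 - C * leftPinv C) * A + C * leftPinv C * A * (1 - rightPinv R * R) ∧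
    ‖A - C * (leftPinv C * A * rightPinv R) * R‖ ≤
        ‖(1 - C * leftPinv C) * A‖ + ‖A * (1 - rightPinv R * R)‖ :=
  cur_error_split_and_bound_general A C R hC
end

section
/- Let A ∈ R^{m×n}, with Z_k ∈ R^{m×k}, W_k ∈ R^{n×k} from a truncated RSVD, Q_W the orthonormal factor of W_k, and selection matrix P with Q_W^T P invertible. If A - A_k = Q_Z T̂_Z D̂_A T̂_W^T Q̃_W^T as in the QR-based partitioning, then ‖A(I - Q_W Q_W^T)‖ ≤ α_{k+1} ‖T̂_Z‖ ‖T_{W,22}‖, where α_{k+1} = ‖D̂_A‖ and T_{W,22} is the trailing triangular block of the QR factorization of W. -/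
open Matrix
open scoped Matrix.Norms.L2Operator

/-!
Since `[Q_{W_k}, Q̂_W]` has orthonormal columns, the projector `1 - Q_{W_k} Q_{W_k}ᵀ` annihilates
`Q_{W_k}ᵀ` and fixes `Q̂_Wᵀ`. Hence the rank-`k` part of `A` disappears and only the last block row
`T_{W,22}` of `T̂_W` survives: `A (1 - Q_{W_k} Q_{W_k}ᵀ) = Q_Z T̂_Z D̂_A T_{W,22}ᵀ Q̂_Wᵀ`. Multiplying
by `Q_Z` on the left or by `Q̂_Wᵀ` on the right does not change the spectral norm, and
submultiplicativity gives the bound.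
-/

namespace Matrix

section Isometry

variable {𝕜 : Type*} [RCLike 𝕜] {l m n : Type*} [Fintype l] [Fintype m] [Fintype n]
  [DecidableEq l] [DecidableEq n] {Q : Matrix m n 𝕜}

lemma l2_opNorm_mul_of_conjTranspose_mul_self_eq_one (hQ : Qᴴ * Q = 1) (M : Matrix n l 𝕜) :
    ‖Q * M‖ = ‖M‖ := by
  have hsq : ‖Q * M‖ * ‖Q * M‖ = ‖M‖ * ‖M‖ := by
    rw [← l2_opNorm_conjTranspose_mul_self, ← l2_opNorm_conjTranspose_mul_self,
      conjTranspose_mul, Matrix.mul_assoc, ← Matrix.mul_assoc Qᴴ, hQ, Matrix.one_mul]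
  exact (mul_self_inj (norm_nonneg _) (norm_nonneg _)).mp hsq

lemma l2_opNorm_mul_conjTranspose_of_conjTranspose_mul_self_eq_one [DecidableEq m]
    (hQ : Qᴴ * Q = 1) (M : Matrix l n 𝕜) : ‖M * Qᴴ‖ = ‖M‖ := by
  rw [← l2_opNorm_conjTranspose, conjTranspose_mul, conjTranspose_conjTranspose,
    l2_opNorm_mul_of_conjTranspose_mul_self_eq_one hQ, l2_opNorm_conjTranspose]

end Isometry

section Partitioned

variable {R : Type*} [Ring R] [StarRing R] {l m n₁ n₂ : Type*} [Fintype m]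
  [DecidableEq n₁] [DecidableEq n₂] {Q₁ : Matrix m n₁ R} {Q₂ : Matrix m n₂ R}

lemma fromBlocks_of_conjTranspose_mul_self_fromCols_eq_one
    (hQ : (fromCols Q₁ Q₂)ᴴ * fromCols Q₁ Q₂ = 1) :
    fromBlocks (Q₁ᴴ * Q₁) (Q₁ᴴ * Q₂) (Q₂ᴴ * Q₁) (Q₂ᴴ * Q₂) = fromBlocks 1 0 0 1 := by
  rw [← fromRows_mul_fromCols, ← conjTranspose_fromCols_eq_fromRows_conjTranspose, hQ,
    fromBlocks_one]

variable [Fintype n₁] [DecidableEq m]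

lemma conjTranspose_fromCols_mul_one_sub_mul_conjTranspose
    (hQ : (fromCols Q₁ Q₂)ᴴ * fromCols Q₁ Q₂ = 1) :
    (fromCols Q₁ Q₂)ᴴ * (1 - Q₁ * Q₁ᴴ) = fromRows 0 Q₂ᴴ := by
  obtain ⟨h11, -, h21, -⟩ :=
    fromBlocks_inj.mp (fromBlocks_of_conjTranspose_mul_self_fromCols_eq_one hQ)
  rw [conjTranspose_fromCols_eq_fromRows_conjTranspose, fromRows_mul, Matrix.mul_sub,
    Matrix.mul_sub, ← Matrix.mul_assoc, ← Matrix.mul_assoc, h11, h21, Matrix.mul_one,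
    Matrix.mul_one, Matrix.one_mul, Matrix.zero_mul, sub_self, sub_zero]

lemma mul_one_sub_mul_conjTranspose_of_eq_add [Fintype n₂] {p : Type*} [Fintype p]
    {T₁ : Matrix n₁ p R} {T₂ : Matrix n₂ p R} {A : Matrix l m R} (X : Matrix l n₁ R) (Y : Matrix l p R)
    (hQ : (fromCols Q₁ Q₂)ᴴ * fromCols Q₁ Q₂ = 1)
    (hA : A = X * Q₁ᴴ + Y * (fromRows T₁ T₂)ᴴ * (fromCols Q₁ Q₂)ᴴ) :
    A * (1 - Q₁ * Q₁ᴴ) = Y * T₂ᴴ * Q₂ᴴ := by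
  have hQ₁ : Q₁ᴴ * (1 - Q₁ * Q₁ᴴ) = 0 := by
    simpa only [conjTranspose_fromCols_eq_fromRows_conjTranspose, fromRows_mul,
      toRows₁_fromRows] using
      congrArg toRows₁ (conjTranspose_fromCols_mul_one_sub_mul_conjTranspose hQ)
  rw [hA, Matrix.add_mul, Matrix.mul_assoc X, hQ₁, Matrix.mul_zero, zero_add, Matrix.mul_assoc,
    conjTranspose_fromCols_mul_one_sub_mul_conjTranspose hQ,
    conjTranspose_fromRows_eq_fromCols_conjTranspose, Matrix.mul_assoc, fromCols_mul_fromRows,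
    Matrix.mul_zero, zero_add, Matrix.mul_assoc]

end Partitioned

end Matrix

/-- In the QR-based partitioning of the truncated RSVD, if
`A = Q_{Z_k} T_{Z_k} D_{A_k} T_{W_k}ᵀ Q_{W_k}ᵀ + Q_Z T̂_Z D̂_A T̂_Wᵀ Q_Wᵀ`
with `Q_Z = [Q_{Z_k}, Q̂_Z]`, `Q_W = [Q_{W_k}, Q̂_W]` having orthonormal columns and
`T̂_Z = [T_{Z,12}; T_{Z,22}]`, `T̂_W = [T_{W,12}; T_{W,22}]`, then
`‖A (I - Q_{W_k} Q_{W_k}ᵀ)‖ ≤ α_{k+1} ‖T̂_Z‖ ‖T_{W,22}‖` where `α_{k+1} = ‖D̂_A‖`. -/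
theorem rsvd_column_projection_error_bound {k m' n' : ℕ}
    (QZk : Matrix (Fin k ⊕ Fin m') (Fin k) ℝ) (QZh : Matrix (Fin k ⊕ Fin m') (Fin m') ℝ)
    (QWk : Matrix (Fin k ⊕ Fin n') (Fin k) ℝ) (QWh : Matrix (Fin k ⊕ Fin n') (Fin n') ℝ)
    (TZk : Matrix (Fin k) (Fin k) ℝ) (TZ12 : Matrix (Fin k) (Fin m') ℝ)
    (TZ22 : Matrix (Fin m') (Fin m') ℝ)
    (TWk : Matrix (Fin k) (Fin k) ℝ) (TW12 : Matrix (Fin k) (Fin n') ℝ)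
    (TW22 : Matrix (Fin n') (Fin n') ℝ)
    (DAk : Matrix (Fin k) (Fin k) ℝ) (DAh : Matrix (Fin m') (Fin n') ℝ)
    (A : Matrix (Fin k ⊕ Fin m') (Fin k ⊕ Fin n') ℝ)
    (hQZ : (Matrix.fromCols QZk QZh)ᵀ * Matrix.fromCols QZk QZh = 1)
    (hQW : (Matrix.fromCols QWk QWh)ᵀ * Matrix.fromCols QWk QWh = 1)
    (hA : A = QZk * TZk * DAk * TWkᵀ * QWkᵀ +
      Matrix.fromCols QZk QZh * Matrix.fromRows TZ12 TZ22 * DAh *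
        (Matrix.fromRows TW12 TW22)ᵀ * (Matrix.fromCols QWk QWh)ᵀ) :
    ‖A * (1 - QWk * QWkᵀ)‖ ≤ ‖DAh‖ * ‖Matrix.fromRows TZ12 TZ22‖ * ‖TW22‖ := by
  simp only [← conjTranspose_eq_transpose_of_trivial] at hQZ hQW hA ⊢
  obtain ⟨-, -, -, hQWh⟩ :=
    fromBlocks_inj.mp (fromBlocks_of_conjTranspose_mul_self_fromCols_eq_one hQW)
  rw [mul_one_sub_mul_conjTranspose_of_eq_add _ _ hQW hA]
  calc ‖fromCols QZk QZh * fromRows TZ12 TZ22 * DAh * TW22ᴴ * QWhᴴ‖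
      = ‖fromRows TZ12 TZ22 * DAh * TW22ᴴ‖ := by
        rw [l2_opNorm_mul_conjTranspose_of_conjTranspose_mul_self_eq_one hQWh, Matrix.mul_assoc,
          Matrix.mul_assoc, l2_opNorm_mul_of_conjTranspose_mul_self_eq_one hQZ, Matrix.mul_assoc]
    _ ≤ ‖fromRows TZ12 TZ22‖ * ‖DAh‖ * ‖TW22ᴴ‖ :=
        (l2_opNorm_mul _ _).trans (mul_le_mul_of_nonneg_right (l2_opNorm_mul _ _) (norm_nonneg _))
    _ = ‖DAh‖ * ‖fromRows TZ12 TZ22‖ * ‖TW22‖ := by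
        rw [l2_opNorm_conjTranspose, mul_comm ‖fromRows TZ12 TZ22‖]
end

section
/- Let A ∈ R^{m×n} and suppose C = A P (columns of A indexed by p) and R = S^T A (rows of A indexed by s) each have full rank k. Then M = C⁺ A R⁺ minimizes ‖A − C X R‖_F over all X ∈ R^{k×k}. -/
open Matrix

attribute [local instance] Matrix.frobeniusNormedAddCommGroup

lemma frob_norm_sq {m n : ℕ} (B : Matrix (Fin m) (Fin n) ℝ) :
    ‖B‖ ^ 2 = ∑ i, ∑ j, (B i j) ^ 2 := by
  rw [Matrix.frobenius_norm_def]
  have hnn : (0:ℝ) ≤ ∑ i, ∑ j, ‖B i j‖ ^ (2:ℝ) := by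
    refine Finset.sum_nonneg fun i _ => Finset.sum_nonneg fun j _ => ?_
    positivity
  rw [← Real.rpow_natCast ((∑ i, ∑ j, ‖B i j‖ ^ (2:ℝ)) ^ (1/2:ℝ)) 2,
    ← Real.rpow_mul hnn]
  norm_num

/-- Stewart's optimality of the middle matrix: if `C = A P` and `R = Sᵀ A` have full rank
`k`, then `M = C⁺ A R⁺` minimizes `‖A − C X R‖_F` over all `X`. -/
theorem middle_matrix_minimizes_frobenius {m n k : ℕ}
    (A : Matrix (Fin m) (Fin n) ℝ)
    (p : Fin k → Fin n) (hp : Function.Injective p)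
    (s : Fin k → Fin m) (hs : Function.Injective s)
    (hC : IsUnit ((A * selectionMatrix p)ᵀ * (A * selectionMatrix p)).det)
    (hR : IsUnit ((((selectionMatrix s)ᵀ * A)) * ((selectionMatrix s)ᵀ * A)ᵀ).det) :
    ∀ X : Matrix (Fin k) (Fin k) ℝ,
      ‖A - (A * selectionMatrix p) *
          (leftPinv (A * selectionMatrix p) * A * rightPinv ((selectionMatrix s)ᵀ * A)) *
          ((selectionMatrix s)ᵀ * A)‖ ≤
        ‖A - (A * selectionMatrix p) * X * ((selectionMatrix s)ᵀ * A)‖ := by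
  intro X
  set C : Matrix (Fin m) (Fin k) ℝ := A * selectionMatrix p with hCdef
  set R : Matrix (Fin k) (Fin n) ℝ := (selectionMatrix s)ᵀ * A with hRdef
  set M : Matrix (Fin k) (Fin k) ℝ := leftPinv C * A * rightPinv R with hMdef
  set B : Matrix (Fin m) (Fin n) ℝ := A - C * M * R with hBdef
  -- key orthogonality: Cᵀ B Rᵀ = 0
  have hkey : Cᵀ * B * Rᵀ = 0 := by
    have h1 : (Cᵀ * C) * (Cᵀ * C)⁻¹ = 1 := Matrix.mul_nonsing_inv _ hC
    have h2 : (R * Rᵀ)⁻¹ * (R * Rᵀ) = 1 := Matrix.nonsing_inv_mul _ hR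
    have : Cᵀ * (C * M * R) * Rᵀ = Cᵀ * A * Rᵀ := by
      rw [hMdef, leftPinv, rightPinv]
      calc Cᵀ * (C * ((Cᵀ * C)⁻¹ * Cᵀ * A * (Rᵀ * (R * Rᵀ)⁻¹)) * R) * Rᵀ
          = (Cᵀ * C) * (Cᵀ * C)⁻¹ * (Cᵀ * A * Rᵀ) * ((R * Rᵀ)⁻¹ * (R * Rᵀ)) := by
            simp only [Matrix.mul_assoc]
        _ = Cᵀ * A * Rᵀ := by rw [h1, h2, Matrix.one_mul, Matrix.mul_one]
    rw [hBdef]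
    simp only [Matrix.mul_sub, Matrix.sub_mul]
    rw [this]
    simp
  -- cross term vanishes for any Y
  have hcross : ∀ Y : Matrix (Fin k) (Fin k) ℝ,
      ∑ i, ∑ j, B i j * (C * Y * R) i j = 0 := by
    intro Y
    have : ∑ i, ∑ j, B i j * (C * Y * R) i j = Matrix.trace (Bᵀ * (C * Y * R)) := by
      rw [Matrix.trace]
      simp only [Matrix.diag, Matrix.mul_apply, Matrix.transpose_apply]
      rw [Finset.sum_comm]
    rw [this]
    have : Bᵀ * (C * Y * R) = Bᵀ * C * Y * R := by simp only [Matrix.mul_assoc]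
    rw [this, Matrix.trace_mul_comm, ← Matrix.mul_assoc, ← Matrix.mul_assoc]
    have hzero : R * Bᵀ * C = 0 := by
      have := congrArg Matrix.transpose hkey
      simpa [Matrix.transpose_mul, Matrix.mul_assoc] using this
    rw [hzero]
    simp
  -- norm decomposition
  have hdecomp : ‖A - C * X * R‖ ^ 2 = ‖B‖ ^ 2 + ‖C * (M - X) * R‖ ^ 2 := by
    have hsplit : A - C * X * R = B + C * (M - X) * R := by
      rw [hBdef]
      simp only [Matrix.sub_mul, Matrix.mul_sub]
      abel
    rw [hsplit, frob_norm_sq, frob_norm_sq, frob_norm_sq]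
    have expand : ∀ i j, (B i j + (C * (M - X) * R) i j) ^ 2
        = B i j ^ 2 + 2 * (B i j * (C * (M - X) * R) i j) + (C * (M - X) * R) i j ^ 2 := by
      intro i j; ring
    calc ∑ i, ∑ j, ((B + C * (M - X) * R) i j) ^ 2
        = ∑ i, ∑ j, (B i j ^ 2 + 2 * (B i j * (C * (M - X) * R) i j)
            + (C * (M - X) * R) i j ^ 2) := by
          refine Finset.sum_congr rfl fun i _ => Finset.sum_congr rfl fun j _ => ?_
          simp only [Matrix.add_apply]
          exact expand i j
      _ = (∑ i, ∑ j, B i j ^ 2) + 2 * (∑ i, ∑ j, B i j * (C * (M - X) * R) i j)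
            + ∑ i, ∑ j, (C * (M - X) * R) i j ^ 2 := by
          simp [Finset.sum_add_distrib, Finset.mul_sum]
      _ = (∑ i, ∑ j, B i j ^ 2) + ∑ i, ∑ j, (C * (M - X) * R) i j ^ 2 := by
          rw [hcross (M - X)]; ring
  have h2 : ‖B‖ ^ 2 ≤ ‖A - C * X * R‖ ^ 2 := by
    rw [hdecomp]
    have : (0:ℝ) ≤ ‖C * (M - X) * R‖ ^ 2 := sq_nonneg _
    linarith
  exact (pow_le_pow_iff_left₀ (norm_nonneg _) (norm_nonneg _) two_ne_zero).mp h2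
end
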